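/- arXiv:1809.00412 — 5 statements merged into one kernel-verified Lean document; each statement's English description precedes it below -/
import Mathlib

section
/- The number of (s,s+1)-core partitions with exactly k distinct parts equals the binomial coefficient C(s-k, k). -/
lemma sigma_partition_ext {P Q : Σ n, Nat.Partition n}
    (h : P.2.parts = Q.2.parts) : P = Q := by
  obtain ⟨n, p⟩ := P
  obtain ⟨m, q⟩ := Q
  simp only at h
  have hnm : n = m := by rw [← p.parts_sum, ← q.parts_sum, h]
  subst hnm
  simp only [Sigma.mk.inj_iff, heq_eq_eq, true_and]
  exact Nat.Partition.ext h

/-- A partition with distinct parts is an `(s,s+1)`-core iff (Straub) its number of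
parts plus its largest part is at most `s`.  The number of such partitions with
exactly `k` (distinct) parts is `C(s-k, k)`. -/
theorem num_cores_with_k_distinct_parts (s k : ℕ) :
    Nat.card {P : Σ n, Nat.Partition n //
      P.2.parts.Nodup ∧ P.2.parts.card = k ∧ k + P.2.parts.sup ≤ s}
      = Nat.choose (s - k) k := by
  set m := s - k with hm
  have e : {P : Σ n, Nat.Partition n //
      P.2.parts.Nodup ∧ P.2.parts.card = k ∧ k + P.2.parts.sup ≤ s} ≃
      {A : Finset ℕ // A ⊆ Finset.Icc 1 m ∧ A.card = k} := by
    refine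
      { toFun := fun P => ⟨P.1.2.parts.toFinset, ?_, ?_⟩
        invFun := fun A => ⟨⟨A.1.val.sum, ⟨A.1.val, ?_, rfl⟩⟩, ?_, ?_, ?_⟩
        left_inv := ?_
        right_inv := ?_ }
    · -- subset
      obtain ⟨⟨n, p⟩, hnd, hcard, hsup⟩ := P
      intro a ha
      simp only [Multiset.mem_toFinset] at ha
      have h1 : 1 ≤ a := p.parts_pos ha
      have h2 : a ≤ p.parts.sup := Multiset.le_sup ha
      simp only at hsup
      have : p.parts.sup ≤ m := by omega
      exact Finset.mem_Icc.mpr ⟨h1, by omega⟩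
    · -- card
      obtain ⟨⟨n, p⟩, hnd, hcard, hsup⟩ := P
      simp only at hcard
      rw [Multiset.toFinset_card_of_nodup hnd, hcard]
    · -- parts pos
      intro i hi
      have := A.2.1 hi
      exact (Finset.mem_Icc.mp this).1
    · -- nodup
      exact A.1.nodup
    · -- card
      exact A.2.2
    · -- sup bound
      obtain ⟨A, hsub, hcard⟩ := A
      simp only
      rcases Nat.eq_zero_or_pos k with hk | hk
      · subst hk
        have : A = ∅ := Finset.card_eq_zero.mp hcard
        subst this
        simp
      · have hA : A.Nonempty := Finset.card_pos.mp (hcard ▸ hk)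
        obtain ⟨a, ha⟩ := hA
        have ham := Finset.mem_Icc.mp (hsub ha)
        have hks : k ≤ s := by
          by_contra hks
          have : m = 0 := by omega
          omega
        have hsup : A.val.sup ≤ m := by
          rw [Multiset.sup_le]
          intro b hb
          exact (Finset.mem_Icc.mp (hsub hb)).2
        omega
    · -- left inverse
      rintro ⟨⟨n, p⟩, hnd, hcard, hsup⟩
      apply Subtype.ext
      apply sigma_partition_ext
      simp only [Multiset.toFinset_val]
      exact hnd.dedup
    · -- right inverse
      rintro ⟨A, hsub, hcard⟩
      apply Subtype.ext
      simp
  rw [Nat.card_congr e]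
  have e2 : {A : Finset ℕ // A ⊆ Finset.Icc 1 m ∧ A.card = k} ≃
      ((Finset.Icc 1 m).powersetCard k : Finset (Finset ℕ)) := by
    apply Equiv.subtypeEquivRight
    intro A
    simp [Finset.mem_powersetCard]
  rw [Nat.card_congr e2, Nat.card_eq_fintype_card, Fintype.card_coe,
    Finset.card_powersetCard, Nat.card_Icc]
  simp
end

section
/- The total number of (s,s+1)-core partitions with distinct parts equals the Fibonacci number Fib(s+1), i.e., the sum over k of C(s-k, k) equals Fib(s+1) (with Fib(1)=Fib(2)=1). -/
/-- The total number of `(s,s+1)`-core partitions with distinct parts is the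
Fibonacci number `Fib(s+1)` (with `Fib 1 = Fib 2 = 1`):
`∑_{0 ≤ k ≤ s/2} C(s-k, k) = Fib(s+1)`. -/
theorem sum_choose_eq_fib (s : ℕ) :
    ∑ k ∈ Finset.range (s / 2 + 1), Nat.choose (s - k) k = Nat.fib (s + 1) := by
  have h1 : Nat.fib (s + 1) = ∑ k ∈ Finset.range (s + 1), Nat.choose (s - k) k := by
    rw [Nat.fib_succ_eq_sum_choose, Finset.Nat.sum_antidiagonal_eq_sum_range_succ
      (fun a b => Nat.choose a b), ← Finset.sum_range_reflect]
    refine Finset.sum_congr rfl fun k hk => ?_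
    simp only [Finset.mem_range] at hk
    congr 1
    omega
  rw [h1]
  refine Finset.sum_subset ?_ ?_
  · intro k hk; simp only [Finset.mem_range] at *; omega
  · intro k _ hk
    simp only [Finset.mem_range] at hk
    exact Nat.choose_eq_zero_of_lt (by omega)
end

section
/- All complex roots of the polynomial g_s(z) = Σ_{0 ≤ k ≤ s/2} C(s-k, k) z^k are real and satisfy z ≤ -1/4. -/
/-!
Let `w² = 1 + 4z` and `α, β = (1 ± w)/2`, the roots of `x² = x + z`. Both `g_s(z)` and
`(α^(s+1) - β^(s+1)) / (α - β)` satisfy `g_(s+2) = g_(s+1) + z g_s` with the same initial values,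
so `(α - β) g_s(z) = α^(s+1) - β^(s+1)`. At a root this forces `|α| = |β|`, i.e.
`|1 + w| = |1 - w|`, so `w` is purely imaginary and `1 + 4z = w² ≤ 0`.
-/

open Finset

section FibPoly

variable {R : Type*}

/-- `g_s(z)`, written as a sum of `C(i, j) z^j` over `i + j = s`; `g_s(1)` is the Fibonacci number
`F_(s+1)`. -/
def fibPoly [CommSemiring R] (s : ℕ) (z : R) : R :=
  ∑ p ∈ antidiagonal s, (p.1.choose p.2 : R) * z ^ p.2

theorem fibPoly_add_two [CommSemiring R] (s : ℕ) (z : R) :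
    fibPoly (s + 2) z = fibPoly (s + 1) z + z * fibPoly s z := by
  rw [fibPoly, fibPoly, fibPoly, Nat.antidiagonal_succ_succ', Nat.antidiagonal_succ']
  simp only [sum_cons, sum_map, mul_sum]
  simp [Nat.choose_succ_succ, sum_add_distrib, add_mul, pow_succ', mul_left_comm z, add_comm,
    add_left_comm]

theorem sum_range_choose_mul_pow_eq_fibPoly [CommSemiring R] (s : ℕ) (z : R) :
    ∑ k ∈ range (s / 2 + 1), ((s - k).choose k : R) * z ^ k = fibPoly s z := by
  rw [fibPoly, ← Nat.sum_antidiagonal_swap]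
  simp only [Prod.fst_swap, Prod.snd_swap]
  rw [Nat.sum_antidiagonal_eq_sum_range_succ (fun j i => (i.choose j : R) * z ^ j)]
  apply sum_subset (range_subset_range.mpr (by omega))
  intro k _ hk
  rw [mem_range, not_lt] at hk
  rw [Nat.choose_eq_zero_of_lt (by omega), Nat.cast_zero, zero_mul]

theorem sub_mul_fibPoly [CommRing R] {α β z : R} (hsum : α + β = 1) (hprod : α * β = -z)
    (s : ℕ) : (α - β) * fibPoly s z = α ^ (s + 1) - β ^ (s + 1) := by
  induction s using Nat.twoStepInduction with
  | zero => simp [fibPoly]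
  | one =>
    have hone : fibPoly 1 z = 1 := by simp [fibPoly, Nat.antidiagonal_succ]
    rw [hone]
    linear_combination -(α - β) * hsum
  | more s ih₀ ih₁ =>
    rw [fibPoly_add_two]
    linear_combination ih₁ + z * ih₀ - α ^ (s + 1) * (α * hsum - hprod)
      + β ^ (s + 1) * (β * hsum - hprod)

end FibPoly

theorem Complex.re_eq_zero_of_norm_one_add_eq_norm_one_sub {w : ℂ}
    (h : ‖1 + w‖ = ‖1 - w‖) : w.re = 0 := by
  have hsq := congrArg (· ^ 2) h
  simp only [Complex.sq_norm, Complex.normSq_apply, Complex.add_re, Complex.add_im,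
    Complex.sub_re, Complex.sub_im, Complex.one_re, Complex.one_im] at hsq
  linarith

theorem norm_one_add_eq_norm_one_sub_of_fibPoly_eq_zero {s : ℕ} {z w : ℂ}
    (hw : w ^ 2 = 1 + 4 * z) (hroot : fibPoly s z = 0) : ‖1 + w‖ = ‖1 - w‖ := by
  have hpow : ((1 + w) / 2) ^ (s + 1) = ((1 - w) / 2) ^ (s + 1) := by
    rw [← sub_eq_zero, ← sub_mul_fibPoly (z := z) (by ring) (by linear_combination -hw / 4), hroot,
      mul_zero]
  have hnorm := congrArg norm hpow
  rwa [norm_pow, norm_pow, pow_left_inj₀ (norm_nonneg _) (norm_nonneg _) s.succ_ne_zero,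
    norm_div, norm_div, div_left_inj' (by norm_num)] at hnorm

theorem g_s_roots_real_nonpositive_general (s : ℕ) (z : ℂ)
    (hroot : ∑ k ∈ Finset.range (s / 2 + 1), (Nat.choose (s - k) k : ℂ) * z ^ k = 0) :
    z.im = 0 ∧ z.re ≤ -1/4 := by
  obtain ⟨w, hw⟩ := IsAlgClosed.exists_pow_nat_eq (1 + 4 * z) two_pos
  rw [sum_range_choose_mul_pow_eq_fibPoly] at hroot
  have hre := Complex.re_eq_zero_of_norm_one_add_eq_norm_one_sub
    (norm_one_add_eq_norm_one_sub_of_fibPoly_eq_zero hw hroot)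
  obtain ⟨y, rfl⟩ : ∃ y : ℝ, w = y * Complex.I :=
    ⟨w.im, by apply Complex.ext <;> simp [hre]⟩
  have hz : z = ((-1 - y ^ 2) / 4 : ℝ) := by
    push_cast
    linear_combination -hw / 4 + (y ^ 2 / 4 : ℂ) * Complex.I_sq
  rw [hz, Complex.ofReal_im, Complex.ofReal_re]
  exact ⟨rfl, by linarith [sq_nonneg y]⟩

/-- All complex roots of the polynomial `g_s(z) = Σ_{0 ≤ k ≤ s/2} C(s-k,k) z^k`
are real and satisfy `z ≤ -1/4`. -/
theorem g_s_roots_real_nonpositive (s : ℕ) (hs : 1 ≤ s) (z : ℂ)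
    (hroot : ∑ k ∈ Finset.range (s / 2 + 1), (Nat.choose (s - k) k : ℂ) * z ^ k = 0) :
    z.im = 0 ∧ z.re ≤ -1/4 :=
  g_s_roots_real_nonpositive_general s z hroot
end

section
/- Let m ≤ n be integers and let U, U', V, V' be real sequences (U, U' defined for m ≤ k ≤ n+1; V, V' for m-1 ≤ k ≤ n). Set u_k = U_k - U_{k+1}, v_k = V_k - V_{k-1}, v'_k = V'_k - V'_{k-1}, δ_U = sup_{m≤k≤n} |U_k - U'_k|, δ_V = sup_{m≤k≤n} |V_k - V'_k|. Then |Σ_{k=m}^n U_k v_k − Σ_{k=m}^n U'_k v'_k| ≤ δ_U Σ_{k=m}^n |v'_k| + δ_V Σ_{k=m}^n |u_k| + |U_{n+1}V_n − U_m V_{m-1}| + |U_{n+1}V'_n − U_m V'_{m-1}|. -/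
/-!
Summation by parts turns `∑ U_k v_k` into `∑ u_k V_k` plus the boundary term
`U_{n+1} V_n - U_m V_{m-1}`. Applied to `V - V'` this writes the difference of the two sums as
`∑ (U_k - U'_k) v'_k + ∑ u_k (V_k - V'_k)` plus two boundary terms, and each of the two sums is
bounded by its sup-norm factor times the `ℓ¹`-norm of the other factor.
-/

open Finset

theorem Finset.sum_Icc_add_one_sub {M : Type*} [AddCommGroup M] (f : ℤ → M) {m n : ℤ}
    (hmn : m ≤ n + 1) : ∑ k ∈ Icc m n, (f (k + 1) - f k) = f (n + 1) - f m := by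
  induction n, (by omega : m - 1 ≤ n) using Int.leInduction with
  | base => simp
  | succ n hn ih =>
    rw [← insert_Icc_right_eq_Icc_add_one (by omega), sum_insert (by simp), ih (by omega)]
    abel

theorem Finset.sum_Icc_mul_sub_by_parts {R : Type*} [CommRing R] (U V : ℤ → R) {m n : ℤ}
    (hmn : m ≤ n + 1) :
    ∑ k ∈ Icc m n, U k * (V k - V (k - 1))
      = ∑ k ∈ Icc m n, (U k - U (k + 1)) * V k + (U (n + 1) * V n - U m * V (m - 1)) := by
  have htel := sum_Icc_add_one_sub (fun k ↦ U k * V (k - 1)) hmn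
  simp only [add_sub_cancel_right] at htel
  rw [← htel, ← sum_add_distrib]
  exact sum_congr rfl fun k _ ↦ by ring

theorem Finset.abs_sum_mul_le_of_abs_le {ι R : Type*} [CommRing R] [LinearOrder R]
    [IsStrictOrderedRing R] {s : Finset ι} {a : ι → R} {δ : R} (h : ∀ i ∈ s, |a i| ≤ δ)
    (b : ι → R) : |∑ i ∈ s, a i * b i| ≤ δ * ∑ i ∈ s, |b i| := by
  calc |∑ i ∈ s, a i * b i| ≤ ∑ i ∈ s, |a i| * |b i| := by
        simpa only [abs_mul] using abs_sum_le_sum_abs (fun i ↦ a i * b i) s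
    _ ≤ ∑ i ∈ s, δ * |b i| := sum_le_sum fun i hi ↦ by gcongr; exact h i hi
    _ = δ * ∑ i ∈ s, |b i| := (mul_sum _ _ _).symm

theorem Finset.sum_Icc_mul_sub_sub_sum_Icc_mul_sub {R : Type*} [CommRing R]
    (U U' V V' : ℤ → R) {m n : ℤ} (hmn : m ≤ n + 1) :
    ∑ k ∈ Icc m n, U k * (V k - V (k - 1)) - ∑ k ∈ Icc m n, U' k * (V' k - V' (k - 1))
      = ∑ k ∈ Icc m n, (U k - U' k) * (V' k - V' (k - 1))
        + ∑ k ∈ Icc m n, (V k - V' k) * (U k - U (k + 1))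
        + (U (n + 1) * V n - U m * V (m - 1)) - (U (n + 1) * V' n - U m * V' (m - 1)) := by
  have hparts := sum_Icc_mul_sub_by_parts U (V - V') hmn
  simp only [Pi.sub_apply, mul_comm (U _ - U _)] at hparts
  simp only [mul_sub, sub_mul, sum_sub_distrib] at hparts ⊢
  linear_combination hparts

/-- Distance estimate via double summation by parts: with
`u_k = U_k - U_{k+1}`, `v_k = V_k - V_{k-1}`, `v'_k = V'_k - V'_{k-1}`, and
`δ_U`, `δ_V` bounds for `sup_{m≤k≤n} |U_k - U'_k|` and `sup_{m≤k≤n} |V_k - V'_k|`,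
`|Σ U_k v_k − Σ U'_k v'_k| ≤ δ_U Σ|v'_k| + δ_V Σ|u_k|
  + |U_{n+1}V_n − U_m V_{m-1}| + |U_{n+1}V'_n − U_m V'_{m-1}|`. -/
theorem distance_estimate (m n : ℤ) (hmn : m ≤ n)
    (U U' V V' : ℤ → ℝ) (δU δV : ℝ)
    (hU : ∀ k ∈ Finset.Icc m n, |U k - U' k| ≤ δU)
    (hV : ∀ k ∈ Finset.Icc m n, |V k - V' k| ≤ δV) :
    |∑ k ∈ Finset.Icc m n, U k * (V k - V (k - 1))
        - ∑ k ∈ Finset.Icc m n, U' k * (V' k - V' (k - 1))|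
      ≤ δU * ∑ k ∈ Finset.Icc m n, |V' k - V' (k - 1)|
        + δV * ∑ k ∈ Finset.Icc m n, |U k - U (k + 1)|
        + |U (n + 1) * V n - U m * V (m - 1)|
        + |U (n + 1) * V' n - U m * V' (m - 1)| := by
  rw [sum_Icc_mul_sub_sub_sum_Icc_mul_sub U U' V V' (by omega)]
  have hA := abs_sum_mul_le_of_abs_le hU fun k ↦ V' k - V' (k - 1)
  have hB := abs_sum_mul_le_of_abs_le hV fun k ↦ U k - U (k + 1)
  refine (abs_sub _ _).trans ?_
  gcongr
  exact (abs_add_three _ _ _).trans (by gcongr)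
end

section
/- Let p_0, ..., p_n be nonnegative reals summing to 1 whose generating polynomial f(x) = Σ p_k x^k has only real roots. Then there exist independent Bernoulli random variables X_1, ..., X_n such that P(X_1 + ... + X_n = j) = p_j for all 0 ≤ j ≤ n. Concretely, if the roots of f are −r_1, ..., −r_n (all nonpositive reals, so r_i ≥ 0), one may take P(X_i = 1) = 1/(1 + r_i). -/
open Polynomial Finset

/-- If nonnegative reals `p_0, ..., p_n` sum to 1 and their generating polynomial
factors as `f(x) = p_n ∏_i (x + r_i)` with all `r_i ≥ 0` (i.e., all roots `−r_i`
are real and nonpositive), then `(p_j)` is the distribution of a sum of `n`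
independent Bernoulli random variables with success probabilities
`π_i = 1/(1+r_i)`:
`p_j = Σ_{T ⊆ {1..n}, |T| = j} ∏_{i ∈ T} π_i · ∏_{i ∉ T} (1 − π_i)`. -/
theorem real_rooted_is_bernoulli_sum (n : ℕ) (p : ℕ → ℝ)
    (hpos : ∀ k, 0 ≤ p k)
    (hsum : ∑ k ∈ Finset.range (n + 1), p k = 1)
    (r : Fin n → ℝ) (hr : ∀ i, 0 ≤ r i)
    (hfact : ∀ x : ℝ, ∑ k ∈ Finset.range (n + 1), p k * x ^ k
      = p n * ∏ i, (x + r i)) :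
    ∀ j ∈ Finset.range (n + 1),
      p j = ∑ T ∈ Finset.univ.filter (fun T : Finset (Fin n) => T.card = j),
        (∏ i ∈ T, 1 / (1 + r i)) * ∏ i ∈ Tᶜ, (1 - 1 / (1 + r i)) := by
  intro j hj
  rw [Finset.mem_range, Nat.lt_succ_iff] at hj
  have hpos1 : ∀ i, (0:ℝ) < 1 + r i := fun i => by linarith [hr i]
  have hne : ∀ i, (1 + r i) ≠ 0 := fun i => ne_of_gt (hpos1 i)
  have h1 : p n * ∏ i, (1 + r i) = 1 := by
    have := hfact 1
    simp only [one_pow, mul_one] at this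
    rw [hsum] at this
    exact this.symm
  have hprodne : (∏ i, (1 + r i)) ≠ 0 := Finset.prod_ne_zero_iff.2 fun i _ => hne i
  have hpn : p n = ∏ i, (1 / (1 + r i)) := by
    rw [Finset.prod_div_distrib, Finset.prod_const_one]
    field_simp
    linarith [h1]
  -- polynomial identity
  have hP : (∑ k ∈ Finset.range (n+1), C (p k) * X ^ k)
      = C (p n) * ∏ i, (X + C (r i)) := by
    apply Polynomial.funext
    intro x
    simp only [Polynomial.eval_finset_sum, Polynomial.eval_mul, Polynomial.eval_pow,
      Polynomial.eval_C, Polynomial.eval_X, Polynomial.eval_prod, Polynomial.eval_add]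
    exact hfact x
  have hle : j ≤ #(Finset.univ : Finset (Fin n)) := by simpa using hj
  have hcoeff := congrArg (fun q : ℝ[X] => q.coeff j) hP
  simp only [Polynomial.finset_sum_coeff, Polynomial.coeff_C_mul,
    Polynomial.coeff_X_pow, Finset.prod_X_add_C_coeff _ r hle] at hcoeff
  rw [Finset.sum_eq_single j (fun k _ hk => by simp [Ne.symm hk]) (by simp [Nat.lt_succ_iff, hj]),
    if_pos rfl, mul_one] at hcoeff
  -- hcoeff : p j = p n * ∑ t ∈ univ.powersetCard (n - j), ∏ i ∈ t, r i
  rw [hcoeff]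
  have hsimp : ∀ T : Finset (Fin n),
      (∏ i ∈ T, 1 / (1 + r i)) * ∏ i ∈ Tᶜ, (1 - 1 / (1 + r i))
      = p n * ∏ i ∈ Tᶜ, r i := by
    intro T
    have : ∀ i, 1 - 1 / (1 + r i) = r i * (1 / (1 + r i)) := by
      intro i
      rw [one_sub_div (hne i), mul_one_div]
      congr 1
      ring
    simp_rw [this, Finset.prod_mul_distrib]
    rw [hpn, ← mul_assoc, mul_comm (∏ i ∈ T, 1 / (1 + r i)),
      mul_assoc (∏ i ∈ Tᶜ, r i), ← Finset.prod_mul_prod_compl T fun i => 1 / (1 + r i)]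
    ring
  rw [Finset.sum_congr rfl fun T _ => hsimp T, ← Finset.mul_sum]
  congr 1
  apply Finset.sum_nbij' (fun t => tᶜ) (fun T => Tᶜ)
  · intro t ht
    rw [Finset.mem_powersetCard] at ht
    have h2 := ht.2
    simp only [Finset.mem_filter, Finset.mem_univ, true_and, Finset.card_compl,
      Fintype.card_fin, Finset.card_univ] at h2 ⊢
    omega
  · intro T hT
    simp only [Finset.mem_filter, Finset.mem_univ, true_and] at hT
    simp only [Finset.mem_powersetCard, Finset.card_compl, Fintype.card_fin,
      Finset.card_univ, hT, Finset.subset_univ, true_and]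
  · intro t _; simp
  · intro T _; simp
  · intro t _; rw [compl_compl]
end
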